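/- arXiv:2401.06918 — 3 statements merged into one kernel-verified Lean document; each statement's English description precedes it below -/
import Mathlib

section
/- Let A ∈ ℝ^{n×n} and let V_{k+1} ∈ ℝ^{n×(k+1)} (with k+1 ≤ n) be a matrix whose first k columns form V_k ∈ ℝ^{n×k} and which satisfies the shifted-Krylov relation V_{k+1} [0_{1×k}; I_k] = A V_k. Suppose V_{k+1} = L_{k+1} U_{k+1} where L_{k+1} ∈ ℝ^{n×(k+1)}, U_{k+1} ∈ ℝ^{(k+1)×(k+1)} is invertible and upper triangular, L_k denotes the first k columns of L_{k+1}, and U_k denotes the leading k×k principal submatrix of U_{k+1} (so that V_k = L_k U_k and U_k is invertible). Then, defining the upper Hessenberg matrix H_{k+1,k} = U_{k+1} [0_{1×k}; I_k] U_k^{-1} ∈ ℝ^{(k+1)×k}, the Hessenberg relation A L_k = L_{k+1} H_{k+1,k} holds. -/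
open Matrix

/-- The `(k+1) × k` matrix `[0_{1×k}; I_k]`: a row of zeros stacked on the identity. -/
def shiftMat (k : ℕ) : Matrix (Fin (k+1)) (Fin k) ℝ :=
  fun i j => if (i : ℕ) = (j : ℕ) + 1 then 1 else 0

/-- the Hessenberg relation `A L_k = L_{k+1} H_{k+1,k}` with
`H_{k+1,k} = U_{k+1} [0; I] U_k⁻¹`, where `V_{k+1} = L_{k+1} U_{k+1}` is an LU-type
factorization of a matrix satisfying the shifted-Krylov relation
`V_{k+1} [0; I] = A V_k`. -/
theorem hessenberg_relation (n k : ℕ) (hkn : k + 1 ≤ n)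
    (A : Matrix (Fin n) (Fin n) ℝ)
    (V1 L1 : Matrix (Fin n) (Fin (k+1)) ℝ)
    (U1 : Matrix (Fin (k+1)) (Fin (k+1)) ℝ)
    (hshift : V1 * shiftMat k = A * V1.submatrix id Fin.castSucc)
    (hLU : V1 = L1 * U1)
    (hU1unit : IsUnit U1) (hU1tri : ∀ i j : Fin (k+1), j < i → U1 i j = 0) :
    A * L1.submatrix id Fin.castSucc =
      L1 * (U1 * shiftMat k * (U1.submatrix Fin.castSucc Fin.castSucc)⁻¹) := by
  set Uk := U1.submatrix Fin.castSucc Fin.castSucc with hUk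
  -- U1 is block triangular, so det U1 = product of diagonal
  have htri1 : U1.BlockTriangular id := fun i j h => hU1tri i j h
  have htrik : Uk.BlockTriangular id := fun i j h => hU1tri _ _ (by
    simpa [Fin.castSucc_lt_castSucc_iff] using h)
  have hdet1 : U1.det = ∏ i, U1 i i := Matrix.det_of_upperTriangular htri1
  have hdetk : Uk.det = ∏ i, Uk i i := Matrix.det_of_upperTriangular htrik
  have hdet1ne : U1.det ≠ 0 := by
    simpa [Matrix.isUnit_iff_isUnit_det, isUnit_iff_ne_zero] using hU1unit
  have hdiag : ∀ i : Fin (k+1), U1 i i ≠ 0 := by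
    intro i hi
    exact hdet1ne (by rw [hdet1]; exact Finset.prod_eq_zero (Finset.mem_univ i) hi)
  have hdetkne : Uk.det ≠ 0 := by
    rw [hdetk]
    exact Finset.prod_ne_zero_iff.mpr fun i _ => hdiag _
  have hUkunit : IsUnit Uk := by
    rw [Matrix.isUnit_iff_isUnit_det, isUnit_iff_ne_zero]; exact hdetkne
  -- V_k = L_k * U_k
  have hVk : V1.submatrix id Fin.castSucc =
      L1.submatrix id Fin.castSucc * Uk := by
    ext i j
    rw [hLU]
    simp only [Matrix.mul_apply, Matrix.submatrix_apply, id]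
    rw [Fin.sum_univ_castSucc]
    have : U1 (Fin.last k) (Fin.castSucc j) = 0 :=
      hU1tri _ _ (Fin.castSucc_lt_last j)
    simp [this, hUk]
  -- L_k = V_k * U_k⁻¹
  have hLk : L1.submatrix id Fin.castSucc = V1.submatrix id Fin.castSucc * Uk⁻¹ := by
    rw [hVk, Matrix.mul_assoc, Matrix.mul_nonsing_inv _ (isUnit_iff_ne_zero.mpr hdetkne), Matrix.mul_one]
  calc A * L1.submatrix id Fin.castSucc
      = A * V1.submatrix id Fin.castSucc * Uk⁻¹ := by rw [hLk, Matrix.mul_assoc]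
    _ = V1 * shiftMat k * Uk⁻¹ := by rw [hshift]
    _ = L1 * (U1 * shiftMat k * Uk⁻¹) := by rw [hLU]; simp only [Matrix.mul_assoc]
end

section
/- Let A ∈ ℝ^{n×n}, b ∈ ℝ^n, λ ∈ ℝ. Let L_{k+1} ∈ ℝ^{n×(k+1)} have full column rank, let L_k ∈ ℝ^{n×k} be its first k columns (also of full column rank), let H_{k+1,k} ∈ ℝ^{(k+1)×k} satisfy A L_k = L_{k+1} H_{k+1,k}, and suppose b = β L_{k+1} e_1 for some β ∈ ℝ (i.e., the initial guess is x_0 = 0 and r_0 = b). Then for every y ∈ ℝ^k, ‖L_{k+1}† (b − A L_k y)‖² + λ² ‖L_k† (L_k y)‖² = ‖β e_1 − H_{k+1,k} y‖² + λ² ‖y‖², where † denotes the Moore–Penrose pseudoinverse and ‖·‖ is the Euclidean norm. -/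
open Matrix

/-- The Euclidean norm of a real vector. -/
noncomputable def enorm {ι : Type*} [Fintype ι] (v : ι → ℝ) : ℝ :=
  Real.sqrt (∑ i, (v i) ^ 2)

/-- The Moore–Penrose pseudoinverse of a full-column-rank real matrix,
`L† = (LᵀL)⁻¹Lᵀ`. -/
noncomputable def pinv {α β : Type*} [Fintype α] [Fintype β] [DecidableEq β]
    (L : Matrix α β ℝ) : Matrix β α ℝ :=
  (Lᵀ * L)⁻¹ * Lᵀ

/-- Full column rank: the columns are linearly independent. -/
def fullColRank {α β : Type*} (M : Matrix α β ℝ) : Prop :=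
  LinearIndependent ℝ (fun j : β => fun i : α => M i j)

lemma pinv_mul_eq_one {α β : Type*} [Fintype α] [Fintype β] [DecidableEq β]
    (L : Matrix α β ℝ) (h : fullColRank L) : pinv L * L = 1 := by
  have hinj : Function.Injective L.mulVec :=
    Matrix.mulVec_injective_iff.mpr h
  have hinj2 : Function.Injective (Lᵀ * L).mulVec := by
    intro x y hxy
    have hd : Lᵀ.mulVec (L.mulVec (x - y)) = 0 := by
      have : (Lᵀ * L).mulVec (x - y) = 0 := by
        rw [Matrix.mulVec_sub, hxy, sub_self]
      rwa [← Matrix.mulVec_mulVec] at this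
    have h0 : (L.mulVec (x - y)) ⬝ᵥ (L.mulVec (x - y)) = 0 := by
      have hdd : (x - y) ⬝ᵥ (Lᵀ.mulVec (L.mulVec (x - y))) = 0 := by
        rw [hd, dotProduct_zero]
      rwa [Matrix.dotProduct_mulVec, Matrix.vecMul_transpose] at hdd
    have hz : L.mulVec (x - y) = 0 := by
      ext i
      have := dotProduct_self_eq_zero.mp h0
      simp [this]
    have : x - y = 0 := hinj (by rw [hz, Matrix.mulVec_zero])
    exact sub_eq_zero.mp this
  have hu : IsUnit (Lᵀ * L) := Matrix.mulVec_injective_iff_isUnit.mp hinj2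
  have := Matrix.nonsing_inv_mul (Lᵀ * L) ((Matrix.isUnit_iff_isUnit_det _).mp hu)
  calc pinv L * L = (Lᵀ * L)⁻¹ * (Lᵀ * L) := by rw [pinv, Matrix.mul_assoc]
    _ = 1 := this

lemma pinv_mulVec {α β : Type*} [Fintype α] [Fintype β] [DecidableEq β]
    (L : Matrix α β ℝ) (h : fullColRank L) (v : β → ℝ) :
    (pinv L).mulVec (L.mulVec v) = v := by
  rw [Matrix.mulVec_mulVec, pinv_mul_eq_one L h, Matrix.one_mulVec]

/-- the H-CMRH projected Tikhonov identity: under the Hessenberg relation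
`A L_k = L_{k+1} H_{k+1,k}` with `b = β L_{k+1} e₁` (so `x₀ = 0`), for every `y`,
`‖L_{k+1}† (b - A L_k y)‖² + λ² ‖L_k† (L_k y)‖² = ‖β e₁ - H_{k+1,k} y‖² + λ² ‖y‖²`. -/
theorem hcmrh_projected_tikhonov (n k : ℕ) (A : Matrix (Fin n) (Fin n) ℝ)
    (b : Fin n → ℝ) (lam : ℝ)
    (L1 : Matrix (Fin n) (Fin (k+1)) ℝ)
    (H : Matrix (Fin (k+1)) (Fin k) ℝ) (β : ℝ)
    (hL1 : fullColRank L1)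
    (hLk : fullColRank (L1.submatrix id Fin.castSucc))
    (hHess : A * L1.submatrix id Fin.castSucc = L1 * H)
    (hb : b = β • L1.mulVec (Pi.single 0 1)) :
    ∀ y : Fin k → ℝ,
      _root_.enorm ((pinv L1).mulVec
          (b - A.mulVec ((L1.submatrix id Fin.castSucc).mulVec y))) ^ 2 +
        lam ^ 2 * _root_.enorm ((pinv (L1.submatrix id Fin.castSucc)).mulVec
          ((L1.submatrix id Fin.castSucc).mulVec y)) ^ 2 =
      _root_.enorm (β • (Pi.single 0 1 : Fin (k+1) → ℝ) - H.mulVec y) ^ 2 +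
        lam ^ 2 * _root_.enorm y ^ 2 := by
  intro y
  have h1 : b - A.mulVec ((L1.submatrix id Fin.castSucc).mulVec y)
      = L1.mulVec (β • (Pi.single 0 1 : Fin (k+1) → ℝ) - H.mulVec y) := by
    rw [hb, Matrix.mulVec_mulVec, hHess, ← Matrix.mulVec_mulVec,
      Matrix.mulVec_sub, Matrix.mulVec_smul]
  rw [h1, pinv_mulVec L1 hL1, pinv_mulVec _ hLk]
end

section
/- Let A ∈ ℝ^{n×n}, b, x_0 ∈ ℝ^n, r_0 = b − A x_0 ≠ 0, and let K_j = span{r_0, A r_0, ..., A^{j-1} r_0} denote the Krylov subspace of order j. Suppose L_{k+1} ∈ ℝ^{n×(k+1)} has full column rank with column space equal to K_{k+1}, and let L_{k+1} = Q_{k+1} R_{k+1} be a QR factorization with Q_{k+1} having orthonormal columns and R_{k+1} ∈ ℝ^{(k+1)×(k+1)} invertible upper triangular. Let x_k^G ∈ x_0 + K_k satisfy ‖b − A x_k^G‖ ≤ ‖b − A x‖ for all x ∈ x_0 + K_k (the GMRES iterate), and let x_k^C ∈ x_0 + K_k satisfy ‖L_{k+1}†(b − A x_k^C)‖ ≤ ‖L_{k+1}†(b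 − A x)‖ for all x ∈ x_0 + K_k (the CMRH iterate). Set r_k^G = b − A x_k^G and r_k^C = b − A x_k^C. Then ‖r_k^G‖ ≤ ‖r_k^C‖ ≤ κ(R_{k+1}) ‖r_k^G‖, where κ(R_{k+1}) = ‖R_{k+1}‖ ‖R_{k+1}^{-1}‖ is the spectral-norm condition number and ‖·‖ on vectors is the Euclidean norm. -/
open Matrix

/-- The Euclidean norm of a real vector. -/
noncomputable def euclNorm {ι : Type*} [Fintype ι] (v : ι → ℝ) : ℝ :=
  Real.sqrt (∑ i, (v i) ^ 2)

/-- The spectral norm (operator 2-norm) of a real matrix. -/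
noncomputable def spec {α β : Type*} [Fintype α] [Fintype β] [DecidableEq β]
    (M : Matrix α β ℝ) : ℝ :=
  ‖LinearMap.toContinuousLinearMap (Matrix.toEuclideanLin M)‖

/-- The column space of a matrix. -/
def colSpace {α β : Type*} (M : Matrix α β ℝ) : Submodule ℝ (α → ℝ) :=
  Submodule.span ℝ (Set.range fun j : β => fun i : α => M i j)

/-- The Krylov subspace `K_j = span{r, A r, ..., A^{j-1} r}`. -/
noncomputable def krylov {n : ℕ} (A : Matrix (Fin n) (Fin n) ℝ) (r : Fin n → ℝ) (j : ℕ) :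
    Submodule ℝ (Fin n → ℝ) :=
  Submodule.span ℝ (Set.range fun i : Fin j => (A ^ (i : ℕ)).mulVec r)

/- ### Auxiliary lemmas -/

lemma enorm_eq_norm {ι : Type*} [Fintype ι] (v : ι → ℝ) :
    euclNorm v = ‖(WithLp.equiv 2 (ι → ℝ)).symm v‖ := by
  rw [EuclideanSpace.norm_eq, euclNorm]
  congr 1
  refine Finset.sum_congr rfl fun i _ => ?_
  simp [sq_abs]

lemma enorm_sq {ι : Type*} [Fintype ι] (v : ι → ℝ) :
    euclNorm v ^ 2 = v ⬝ᵥ v := by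
  rw [euclNorm, Real.sq_sqrt (by positivity)]
  simp [dotProduct, sq]

lemma enorm_nonneg' {ι : Type*} [Fintype ι] (v : ι → ℝ) : 0 ≤ euclNorm v :=
  Real.sqrt_nonneg _

/-- Spectral norm bound. -/
lemma enorm_mulVec_le {α β : Type*} [Fintype α] [Fintype β] [DecidableEq β]
    (M : Matrix α β ℝ) (v : β → ℝ) :
    euclNorm (M.mulVec v) ≤ spec M * euclNorm v := by
  rw [enorm_eq_norm, enorm_eq_norm, spec]
  have := (LinearMap.toContinuousLinearMap (Matrix.toEuclideanLin M)).le_opNorm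
    ((WithLp.equiv 2 (β → ℝ)).symm v)
  simpa [Matrix.toEuclideanLin_apply_piLp_toLp] using this

/-- Orthonormal columns preserve the norm. -/
lemma enorm_orth {α β : Type*} [Fintype α] [Fintype β] [DecidableEq β]
    (Q : Matrix α β ℝ) (hQ : Qᵀ * Q = 1) (w : β → ℝ) :
    euclNorm (Q.mulVec w) = euclNorm w := by
  have h : euclNorm (Q.mulVec w) ^ 2 = euclNorm w ^ 2 := by
    rw [enorm_sq, enorm_sq, Matrix.dotProduct_mulVec, ← Matrix.mulVec_transpose,
      Matrix.mulVec_mulVec, hQ, Matrix.one_mulVec]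
  have := congrArg Real.sqrt h
  rwa [Real.sqrt_sq (enorm_nonneg' _), Real.sqrt_sq (enorm_nonneg' _)] at this

lemma fullColRank.mulVec_injective {α β : Type*} [Fintype α] [Fintype β]
    {M : Matrix α β ℝ} (h : fullColRank M) : Function.Injective M.mulVec := by
  rw [Matrix.mulVec_injective_iff]
  exact h

lemma fullColRank.isUnit_transpose_mul_self {α β : Type*} [Fintype α] [Fintype β]
    [DecidableEq β] {M : Matrix α β ℝ} (h : fullColRank M) : IsUnit (Mᵀ * M) := by
  rw [← Matrix.mulVec_injective_iff_isUnit]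
  have key : ∀ d : β → ℝ, (Mᵀ * M).mulVec d = 0 → d = 0 := by
    intro d hd
    have h1 : (M.mulVec d) ⬝ᵥ (M.mulVec d) = 0 := by
      rw [Matrix.dotProduct_mulVec, ← Matrix.mulVec_transpose, Matrix.mulVec_mulVec, hd,
        zero_dotProduct]
    have h2 : M.mulVec d = 0 := dotProduct_self_eq_zero.mp h1
    have := h.mulVec_injective (a₁ := d) (a₂ := 0)
    simp only [Matrix.mulVec_zero] at this
    exact this h2
  intro x y hxy
  have : (Mᵀ * M).mulVec (x - y) = 0 := by
    rw [Matrix.mulVec_sub, hxy, sub_self]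
  exact sub_eq_zero.mp (key _ this)

/-- For `v` in the column space, `pinv L v` recovers the coordinates. -/
lemma pinv_mulVec_of_mem {α β : Type*} [Fintype α] [Fintype β] [DecidableEq β]
    {L : Matrix α β ℝ} (hL : fullColRank L) (c : β → ℝ) :
    (pinv L).mulVec (L.mulVec c) = c := by
  rw [pinv, Matrix.mulVec_mulVec, Matrix.mul_assoc,
    Matrix.nonsing_inv_mul _ ((Matrix.isUnit_iff_isUnit_det _).mp
      hL.isUnit_transpose_mul_self), Matrix.one_mulVec]

/-- Column-space membership gives a coordinate vector. -/
lemma exists_coords {α β : Type*} [Fintype α] [Fintype β]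
    {M : Matrix α β ℝ} {v : α → ℝ} (hv : v ∈ colSpace M) :
    ∃ c : β → ℝ, v = M.mulVec c := by
  have hcs : colSpace M = LinearMap.range M.mulVecLin := by
    rw [Matrix.range_mulVecLin, colSpace]
    congr 1
  rw [hcs] at hv
  obtain ⟨c, hc⟩ := hv
  exact ⟨c, hc.symm⟩

/-- the CMRH–GMRES residual bound
`‖r_k^G‖ ≤ ‖r_k^C‖ ≤ κ(R_{k+1}) ‖r_k^G‖`, where `L_{k+1} = Q_{k+1} R_{k+1}` is a QR
factorization of the Hessenberg basis of `K_{k+1}`, `x_k^G` is the GMRES iterate and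
`x_k^C` the CMRH iterate. -/
theorem cmrh_gmres_residual_bound (n k : ℕ) (A : Matrix (Fin n) (Fin n) ℝ)
    (b x0 : Fin n → ℝ)
    (hr0 : b - A.mulVec x0 ≠ 0)
    (L1 Q1 : Matrix (Fin n) (Fin (k+1)) ℝ)
    (R1 : Matrix (Fin (k+1)) (Fin (k+1)) ℝ)
    (hL : fullColRank L1)
    (hcol : colSpace L1 = krylov A (b - A.mulVec x0) (k+1))
    (hQR : L1 = Q1 * R1) (hQorth : Q1ᵀ * Q1 = 1)
    (hRunit : IsUnit R1) (hRtri : ∀ i j : Fin (k+1), j < i → R1 i j = 0)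
    (xG xC : Fin n → ℝ)
    (hxG : xG - x0 ∈ krylov A (b - A.mulVec x0) k)
    (hxC : xC - x0 ∈ krylov A (b - A.mulVec x0) k)
    (hGopt : ∀ x : Fin n → ℝ, x - x0 ∈ krylov A (b - A.mulVec x0) k →
      euclNorm (b - A.mulVec xG) ≤ euclNorm (b - A.mulVec x))
    (hCopt : ∀ x : Fin n → ℝ, x - x0 ∈ krylov A (b - A.mulVec x0) k →
      euclNorm ((pinv L1).mulVec (b - A.mulVec xC)) ≤
        euclNorm ((pinv L1).mulVec (b - A.mulVec x))) :
    euclNorm (b - A.mulVec xG) ≤ euclNorm (b - A.mulVec xC) ∧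
    euclNorm (b - A.mulVec xC) ≤ spec R1 * spec R1⁻¹ * euclNorm (b - A.mulVec xG) := by
  set r0 : Fin n → ℝ := b - A.mulVec x0 with hr0def
  -- residuals lie in the Krylov space of order k+1, i.e. the column space of L1
  have hres : ∀ x : Fin n → ℝ, x - x0 ∈ krylov A r0 k →
      b - A.mulVec x ∈ colSpace L1 := by
    intro x hx
    rw [hcol]
    have hsub : b - A.mulVec x = r0 - A.mulVec (x - x0) := by
      rw [hr0def, Matrix.mulVec_sub]
      abel
    rw [hsub]
    have h1 : r0 ∈ krylov A r0 (k+1) := by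
      have : (A ^ ((0 : Fin (k+1)) : ℕ)).mulVec r0 ∈ krylov A r0 (k+1) :=
        Submodule.subset_span ⟨0, rfl⟩
      simpa using this
    have h2 : A.mulVec (x - x0) ∈ krylov A r0 (k+1) := by
      have hmap : krylov A r0 k ≤ Submodule.comap A.mulVecLin (krylov A r0 (k+1)) := by
        rw [krylov, Submodule.span_le]
        rintro _ ⟨i, rfl⟩
        simp only [SetLike.mem_coe, Submodule.mem_comap, Matrix.mulVecLin_apply]
        have : A.mulVec ((A ^ (i : ℕ)).mulVec r0) = (A ^ ((i : ℕ) + 1)).mulVec r0 := by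
          rw [Matrix.mulVec_mulVec, pow_succ']
        rw [this]
        exact Submodule.subset_span ⟨⟨(i : ℕ) + 1, by omega⟩, rfl⟩
      exact hmap hx
    exact Submodule.sub_mem _ h1 h2
  -- key norm comparisons on the column space
  have hRinv : R1⁻¹ * R1 = 1 :=
    Matrix.nonsing_inv_mul _ ((Matrix.isUnit_iff_isUnit_det _).mp hRunit)
  have key1 : ∀ v : Fin n → ℝ, v ∈ colSpace L1 →
      euclNorm v ≤ spec R1 * euclNorm ((pinv L1).mulVec v) := by
    intro v hv
    obtain ⟨c, rfl⟩ := exists_coords hv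
    rw [pinv_mulVec_of_mem hL]
    calc euclNorm (L1.mulVec c) = euclNorm (R1.mulVec c) := by
          rw [hQR, ← Matrix.mulVec_mulVec, enorm_orth Q1 hQorth]
      _ ≤ spec R1 * euclNorm c := enorm_mulVec_le _ _
  have key2 : ∀ v : Fin n → ℝ, v ∈ colSpace L1 →
      euclNorm ((pinv L1).mulVec v) ≤ spec R1⁻¹ * euclNorm v := by
    intro v hv
    obtain ⟨c, rfl⟩ := exists_coords hv
    rw [pinv_mulVec_of_mem hL]
    have hc : c = R1⁻¹.mulVec (R1.mulVec c) := by
      rw [Matrix.mulVec_mulVec, hRinv, Matrix.one_mulVec]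
    calc euclNorm c = euclNorm (R1⁻¹.mulVec (R1.mulVec c)) := by rw [← hc]
      _ ≤ spec R1⁻¹ * euclNorm (R1.mulVec c) := enorm_mulVec_le _ _
      _ = spec R1⁻¹ * euclNorm (L1.mulVec c) := by
          rw [hQR, ← Matrix.mulVec_mulVec, enorm_orth Q1 hQorth]
  constructor
  · exact hGopt xC hxC
  · have hCmem := hres xC hxC
    have hGmem := hres xG hxG
    have hspecR : 0 ≤ spec R1 := norm_nonneg _
    calc euclNorm (b - A.mulVec xC)
        ≤ spec R1 * euclNorm ((pinv L1).mulVec (b - A.mulVec xC)) := key1 _ hCmem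
      _ ≤ spec R1 * euclNorm ((pinv L1).mulVec (b - A.mulVec xG)) :=
          mul_le_mul_of_nonneg_left (hCopt xG hxG) hspecR
      _ ≤ spec R1 * (spec R1⁻¹ * euclNorm (b - A.mulVec xG)) :=
          mul_le_mul_of_nonneg_left (key2 _ hGmem) hspecR
      _ = spec R1 * spec R1⁻¹ * euclNorm (b - A.mulVec xG) := by ring
end
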